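/- arXiv:2212.02833 — 4 statements merged into one kernel-verified Lean document; each statement's English description precedes it below -/
import Mathlib

section
/- Let (X, ⊥) satisfy properties S and Z. Then for all A, B ⊆ X: A ⊗ B = cl(B) ∩ cl(B^⊥ ∪ A) = (B^⊥ ⊕ A^⊥)^⊥, and A ⊕ B = cl(A ∪ (A^⊥ ∩ cl(B))). -/
variable {X : Type*}

/-- Orthogonal complement: `A^⊥ = {b : b ⊥ a for all a ∈ A}`. -/
def oc (R : X → X → Prop) (A : Set X) : Set X := {b | ∀ a ∈ A, R b a}

/-- Closure: `cl(A) = (A^⊥)^⊥`. -/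
def ocl (R : X → X → Prop) (A : Set X) : Set X := oc R (oc R A)

/-- The zero set `Z = {y : y ⊥ x for all x}`. -/
def zset (R : X → X → Prop) : Set X := {y | ∀ x, R y x}

/-- Sasaki projection `A ⊗ B = cl(B) ∩ (cl(B) ∩ A^⊥)^⊥`. -/
def sproj (R : X → X → Prop) (A B : Set X) : Set X :=
  ocl R B ∩ oc R (ocl R B ∩ oc R A)

/-- Dual of the Sasaki projection: `A ⊕ B = (B^⊥ ⊗ A^⊥)^⊥`. -/
def sdual (R : X → X → Prop) (A B : Set X) : Set X :=
  oc R (sproj R (oc R B) (oc R A))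

/-- Set orthogonality: `A ⊥ B` iff `a ⊥ b` for all `a ∈ A`, `b ∈ B`. -/
def orth (R : X → X → Prop) (A B : Set X) : Prop := ∀ a ∈ A, ∀ b ∈ B, R a b

lemma oc_union' (R : X → X → Prop) (A B : Set X) :
    oc R (A ∪ B) = oc R A ∩ oc R B := by
  ext x
  simp only [oc, Set.mem_setOf_eq, Set.mem_inter_iff, Set.mem_union]
  constructor
  · exact fun h => ⟨fun a ha => h a (Or.inl ha), fun a ha => h a (Or.inr ha)⟩
  · rintro ⟨h1, h2⟩ a (ha | ha)
    · exact h1 a ha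
    · exact h2 a ha

lemma oc_anti' (R : X → X → Prop) {A B : Set X} (h : A ⊆ B) :
    oc R B ⊆ oc R A := fun x hx a ha => hx a (h ha)

lemma subset_ocl' (R : X → X → Prop) (hS : ∀ x y : X, R x y → R y x)
    (A : Set X) : A ⊆ ocl R A := fun a ha b hb => hS b a (hb a ha)

lemma oc_ocl' (R : X → X → Prop) (hS : ∀ x y : X, R x y → R y x)
    (A : Set X) : oc R (ocl R A) = oc R A := by
  apply Set.Subset.antisymm
  · exact oc_anti' R (subset_ocl' R hS A)
  · exact subset_ocl' R hS (oc R A)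

lemma ocl_oc' (R : X → X → Prop) (hS : ∀ x y : X, R x y → R y x)
    (A : Set X) : ocl R (oc R A) = oc R A := oc_ocl' R hS A

lemma ocl_mono' (R : X → X → Prop) {A B : Set X} (h : A ⊆ B) :
    ocl R A ⊆ ocl R B := oc_anti' R (oc_anti' R h)

lemma sproj_flat' (R : X → X → Prop) (hS : ∀ x y : X, R x y → R y x)
    (A B : Set X) : ocl R (sproj R A B) = sproj R A B := by
  apply Set.Subset.antisymm
  · intro x hx
    constructor
    · have := ocl_mono' R (Set.inter_subset_left :
        sproj R A B ⊆ ocl R B) hx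
      rwa [show ocl R (ocl R B) = ocl R B from oc_ocl' R hS (oc R B)] at this
    · have := ocl_mono' R (Set.inter_subset_right :
        sproj R A B ⊆ oc R (ocl R B ∩ oc R A)) hx
      rwa [ocl_oc' R hS] at this
  · exact subset_ocl' R hS _

theorem stmt2 (R : X → X → Prop)
    (hS : ∀ x y : X, R x y → R y x)
    (hZ : ∀ x : X, R x x → x ∈ zset R) :
    ∀ A B : Set X,
      sproj R A B = ocl R B ∩ ocl R (oc R B ∪ A) ∧
      sproj R A B = oc R (sdual R (oc R B) (oc R A)) ∧
      sdual R A B = ocl R (A ∪ (oc R A ∩ ocl R B)) := by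
  have oc3 : ∀ C : Set X, oc R (oc R (oc R C)) = oc R C :=
    fun C => oc_ocl' R hS C
  intro A B
  refine ⟨?_, ?_, ?_⟩
  · show _ = _ ∩ oc R (oc R (oc R B ∪ A))
    rw [oc_union']
    rfl
  · show sproj R A B =
      oc R (oc R (sproj R (oc R (oc R A)) (oc R (oc R B))))
    have h : sproj R (oc R (oc R A)) (oc R (oc R B)) = sproj R A B := by
      show oc R (oc R (oc R (oc R B))) ∩
          oc R (oc R (oc R (oc R (oc R B))) ∩ oc R (oc R (oc R A))) =
          oc R (oc R B) ∩ oc R (oc R (oc R B) ∩ oc R A)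
      rw [oc3 (oc R B), oc3 A]
    rw [h]
    exact (sproj_flat' R hS A B).symm
  · show oc R (oc R (oc R (oc R A)) ∩
        oc R (oc R (oc R (oc R A)) ∩ oc R (oc R B))) =
      oc R (oc R (A ∪ (oc R A ∩ oc R (oc R B))))
    rw [oc_union', oc3 A]
end

section
/- Let (X, ⊥, F) be an O-space. Then for all A, B ∈ F with A ⊆ B, one has A ⊗ B = A. -/
variable {X : Type*}

/-- An O-space: a symmetric relation satisfying Z, together with a family `F`
of subsets satisfying properties F, O and A. -/
structure IsOSpace (R : X → X → Prop) (F : Set (Set X)) : Prop where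
  symm : ∀ x y : X, R x y → R y x
  zero : ∀ x : X, R x x → x ∈ zset R
  flats : ∀ A ∈ F, A = ocl R A
  singcl_mem : ∀ x : X, ocl R {x} ∈ F
  z_mem : zset R ∈ F
  oc_mem : ∀ A ∈ F, oc R A ∈ F
  sproj_mem : ∀ A ∈ F, ∀ B ∈ F, sproj R A B ∈ F
  o1 : ∀ x : X, ∀ A ∈ F, x ∈ ocl R (sproj R {x} A ∪ sproj R {x} (oc R A))
  o2 : ∀ x : X, ∀ A ∈ F, sproj R {x} A ⊆ ocl R ({x} ∪ sproj R {x} (oc R A))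
  a : ∀ A ∈ F, ∀ B ∈ F, sproj R A B ⊆ ⋃ a ∈ A, sproj R {a} B

theorem stmt7 (R : X → X → Prop) (F : Set (Set X)) (h : IsOSpace R F)
    (A B : Set X) (hA : A ∈ F) (hB : B ∈ F) (hAB : A ⊆ B) :
    sproj R A B = A := by
  have oc_anti : ∀ {S T : Set X}, S ⊆ T → oc R T ⊆ oc R S :=
    fun hST x hx a ha => hx a (hST ha)
  have subset_ocl : ∀ S : Set X, S ⊆ ocl R S :=
    fun S a ha b hb => h.symm b a (hb a ha)
  have oc_ocl : ∀ S : Set X, oc R (ocl R S) = oc R S := fun S =>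
    subset_antisymm (oc_anti (subset_ocl S)) (subset_ocl (oc R S))
  have hBf : ocl R B = B := (h.flats B hB).symm
  have hocBA : oc R B ⊆ oc R A := oc_anti hAB
  ext x
  constructor
  · rintro ⟨hx1, hx2⟩
    rw [h.flats A hA]
    intro c hc
    -- claim1 : sproj R {c} B ⊆ ocl R B ∩ oc R A
    have claim1 : sproj R {c} B ⊆ ocl R B ∩ oc R A := by
      intro y hy
      refine ⟨hy.1, ?_⟩
      have h2 := h.o2 c B hB hy
      have hsub : ({c} : Set X) ∪ sproj R {c} (oc R B) ⊆ oc R A := by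
        rintro z (hz | hz)
        · rw [Set.mem_singleton_iff] at hz; exact hz ▸ hc
        · exact hocBA ((oc_ocl B).subset hz.1)
      have : ocl R ({c} ∪ sproj R {c} (oc R B)) ⊆ ocl R (oc R A) :=
        oc_anti (oc_anti hsub)
      exact (oc_ocl A).subset (this h2)
    have claim2 : sproj R {c} (oc R B) ⊆ oc R B := fun y hy =>
      (oc_ocl B).subset hy.1
    have hxorth : x ∈ oc R (sproj R {c} B ∪ sproj R {c} (oc R B)) := by
      rintro y (hy | hy)
      · exact hx2 y (claim1 hy)
      · exact hx1 y (claim2 hy)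
    have hc1 := h.o1 c B hB
    exact h.symm c x (hc1 x hxorth)
  · intro hx
    refine ⟨subset_ocl B (hAB hx), ?_⟩
    rintro y ⟨-, hy2⟩
    exact h.symm y x (hy2 x hx)
end

section
/- Let (X, ⊥, F) be an O-space. Then for all A, B ∈ F with A ⊥ B, one has cl(A ∪ B) ∩ B^⊥ = A. -/
variable {X : Type*}

theorem stmt8 (R : X → X → Prop) (F : Set (Set X)) (h : IsOSpace R F)
    (A B : Set X) (hA : A ∈ F) (hB : B ∈ F) (hAB : orth R A B) :
    ocl R (A ∪ B) ∩ oc R B = A := by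
  have hAflat := h.flats A hA
  apply Set.Subset.antisymm
  · rintro x ⟨hx1, hx2⟩
    have ho1 := h.o1 x A hA
    -- the union in o1 is contained in A ∪ Z
    have hsub : sproj R {x} A ∪ sproj R {x} (oc R A) ⊆ A ∪ zset R := by
      rintro y (⟨hy, _⟩ | ⟨hy1, hy2⟩)
      · left; rwa [hAflat]
      · right
        have hyA : y ∈ oc R A := by
          have : ocl R (oc R A) = oc R A := by
            show oc R (ocl R A) = oc R A
            rw [← hAflat]
          rwa [this] at hy1
        have hBsub : B ⊆ ocl R (oc R A) ∩ oc R {x} := by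
          intro b hb
          constructor
          · have : b ∈ oc R A := fun a ha => h.symm _ _ (hAB a ha b hb)
            have : ocl R (oc R A) = oc R A := by
              show oc R (ocl R A) = oc R A
              rw [← hAflat]
            rw [this]
            exact fun a ha => h.symm _ _ (hAB a ha b hb)
          · intro a ha
            rcases ha with rfl
            exact h.symm _ _ (hx2 b hb)
        have hyAB : y ∈ oc R (A ∪ B) := by
          rintro a (ha | hb)
          · exact hyA a ha
          · exact hy2 a (hBsub hb)
        have hyx : R y x := h.symm _ _ (hx1 y hyAB)
        have hyy : R y y := by
          apply hy2
          constructor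
          · rwa [show ocl R (oc R A) = oc R A from by
              show oc R (ocl R A) = oc R A; rw [← hAflat]]
          · intro a ha; rcases ha with rfl; exact hyx
        exact h.zero y hyy
    -- x ∈ ocl (A ∪ Z) and ocl (A ∪ Z) ⊆ A
    have hx3 : x ∈ ocl R (A ∪ zset R) := by
      intro w hw
      apply ho1
      intro s hs
      exact hw s (hsub hs)
    have hocAZ : oc R A ⊆ oc R (A ∪ zset R) := by
      rintro w hw a (ha | hz)
      · exact hw a ha
      · exact h.symm _ _ (hz w)
    have : x ∈ ocl R A := fun w hw => hx3 w (hocAZ hw)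
    rwa [← hAflat] at this
  · intro a ha
    constructor
    · intro w hw
      exact h.symm _ _ (hw a (Or.inl ha))
    · intro b hb
      exact hAB a ha b hb
end

section
/- Let (X, ⊥, F) be an O-space and let C ∈ F. Then the structure (C, ⊥_C, F_C), where ⊥_C is the restriction of ⊥ to C and F_C = F ∩ 2^C, is an O-space; moreover, for all A, B ⊆ C: A^{⊥_C} = A^⊥ ∩ C, (A^{⊥_C})^{⊥_C} = cl(A), A ⊗_C B = A ⊗ B, and A ⊕_C B = A ⊕ B, where the subscripted operations are the orthogonal complement, Sasaki projection and its dual computed inside the structure (C, ⊥_C). -/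
variable {X : Type*}

/-- Relative orthogonal complement inside the carrier `C`:
`A^{⊥_C} = {b ∈ C : b ⊥ a for all a ∈ A}`. -/
def ocOn (C : Set X) (R : X → X → Prop) (A : Set X) : Set X :=
  {b | b ∈ C ∧ ∀ a ∈ A, R b a}

/-- Relative closure inside `C`. -/
def oclOn (C : Set X) (R : X → X → Prop) (A : Set X) : Set X :=
  ocOn C R (ocOn C R A)

/-- Relative zero set inside `C`. -/
def zsetOn (C : Set X) (R : X → X → Prop) : Set X :=
  {y | y ∈ C ∧ ∀ x ∈ C, R y x}

/-- Relative Sasaki projection inside `C`: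
`A ⊗_C B = cl_C(B) ∩ (cl_C(B) ∩ A^{⊥_C})^{⊥_C} ∩ C`. -/
def sprojOn (C : Set X) (R : X → X → Prop) (A B : Set X) : Set X :=
  oclOn C R B ∩ ocOn C R (oclOn C R B ∩ ocOn C R A) ∩ C

/-- Relative dual of the Sasaki projection inside `C`:
`A ⊕_C B = (B^{⊥_C} ⊗_C A^{⊥_C})^{⊥_C}`. -/
def sdualOn (C : Set X) (R : X → X → Prop) (A B : Set X) : Set X :=
  ocOn C R (sprojOn C R (ocOn C R B) (ocOn C R A))

/-- An O-space structure on the carrier set `C` (with the relation implicitly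
restricted to `C`, since all the relative operations only involve elements of `C`). -/
structure IsOSpaceOn (C : Set X) (R : X → X → Prop) (F : Set (Set X)) : Prop where
  symm : ∀ x ∈ C, ∀ y ∈ C, R x y → R y x
  zero : ∀ x ∈ C, R x x → x ∈ zsetOn C R
  sub : ∀ A ∈ F, A ⊆ C
  flats : ∀ A ∈ F, A = oclOn C R A
  singcl_mem : ∀ x ∈ C, oclOn C R {x} ∈ F
  z_mem : zsetOn C R ∈ F
  oc_mem : ∀ A ∈ F, ocOn C R A ∈ F
  sproj_mem : ∀ A ∈ F, ∀ B ∈ F, sprojOn C R A B ∈ F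
  o1 : ∀ x ∈ C, ∀ A ∈ F, x ∈ oclOn C R (sprojOn C R {x} A ∪ sprojOn C R {x} (ocOn C R A))
  o2 : ∀ x ∈ C, ∀ A ∈ F, sprojOn C R {x} A ⊆ oclOn C R ({x} ∪ sprojOn C R {x} (ocOn C R A))
  a : ∀ A ∈ F, ∀ B ∈ F, sprojOn C R A B ⊆ ⋃ a ∈ A, sprojOn C R {a} B

section Stmt13Aux

variable {X : Type*}

lemma st13_oc_anti (R : X → X → Prop) {A B : Set X} (hAB : A ⊆ B) : oc R B ⊆ oc R A :=
  fun b hb a ha => hb a (hAB ha)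

lemma st13_subset_ocl (R : X → X → Prop) (hs : ∀ x y : X, R x y → R y x) (A : Set X) :
    A ⊆ ocl R A := fun a ha b hb => hs _ _ (hb a ha)

lemma st13_ocl_oc (R : X → X → Prop) (hs : ∀ x y : X, R x y → R y x) (A : Set X) :
    ocl R (oc R A) = oc R A :=
  subset_antisymm (st13_oc_anti R (st13_subset_ocl R hs A)) (st13_subset_ocl R hs (oc R A))

lemma st13_ocl_mono (R : X → X → Prop) {A B : Set X} (hAB : A ⊆ B) :
    ocl R A ⊆ ocl R B := st13_oc_anti R (st13_oc_anti R hAB)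

lemma st13_inter_oc (R : X → X → Prop) (A B : Set X) :
    oc R A ∩ oc R B = oc R (A ∪ B) := by
  ext u
  exact ⟨fun hu a ha => ha.elim (fun h => hu.1 a h) (fun h => hu.2 a h),
    fun hu => ⟨fun a ha => hu a (Or.inl ha), fun a ha => hu a (Or.inr ha)⟩⟩

lemma st13_ocOn (C : Set X) (R : X → X → Prop) (A : Set X) :
    ocOn C R A = oc R A ∩ C := by
  ext b; exact ⟨fun hb => ⟨hb.2, hb.1⟩, fun hb => ⟨hb.2, hb.1⟩⟩

variable {R : X → X → Prop} {F : Set (Set X)} {C : Set X}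

lemma st13_ocl_sub (h : IsOSpace R F) (hC : C ∈ F) {A : Set X} (hA : A ⊆ C) :
    ocl R A ⊆ C := by
  have h1 : ocl R A ⊆ ocl R C := st13_ocl_mono R hA
  rwa [← h.flats C hC] at h1

lemma st13_HL (h : IsOSpace R F) (hC : C ∈ F) {B : Set X} (hB : B ⊆ C) {b : X}
    (hbC : b ∈ C) (hb : ∀ s ∈ oc R B, s ∈ C → R b s) : ∀ y ∈ oc R B, R b y := by
  intro y hy
  have h1 := h.o1 y C hC
  have hb2 : b ∈ oc R (sproj R {y} C ∪ sproj R {y} (oc R C)) := by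
    intro s hs
    rcases hs with hs | hs
    · refine hb s ?_ ?_
      · intro a ha
        refine hs.2 a ⟨?_, ?_⟩
        · exact st13_subset_ocl R h.symm C (hB ha)
        · intro t ht
          rw [Set.mem_singleton_iff] at ht; subst ht
          exact h.symm _ _ (hy a ha)
      · rw [h.flats C hC]; exact hs.1
    · have hb' : b ∈ ocl R C := by rw [← h.flats C hC]; exact hbC
      have hs' : s ∈ oc R C := by
        have := hs.1
        rw [st13_ocl_oc R h.symm C] at this
        exact this
      exact hb' s hs'
  exact h.symm _ _ (h1 b hb2)

lemma st13_oc_relC (h : IsOSpace R F) (hC : C ∈ F) {T : Set X} (hT : T ⊆ C) :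
    oc R (oc R T ∩ C) ∩ C = ocl R T := by
  ext b
  constructor
  · rintro ⟨hb1, hbC⟩
    exact st13_HL h hC hT hbC (fun s hs hsC => hb1 s ⟨hs, hsC⟩)
  · intro hb
    exact ⟨fun s hs => hb s hs.1, st13_ocl_sub h hC hT hb⟩

lemma st13_oclOn (h : IsOSpace R F) (hC : C ∈ F) {A : Set X} (hA : A ⊆ C) :
    oclOn C R A = ocl R A := by
  have e : oclOn C R A = oc R (oc R A ∩ C) ∩ C := by
    show ocOn C R (ocOn C R A) = _
    rw [st13_ocOn, st13_ocOn]
  rw [e, st13_oc_relC h hC hA]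

lemma st13_sprojOn (h : IsOSpace R F) (hC : C ∈ F) {A B : Set X}
    (hA : A ⊆ C) (hB : B ⊆ C) : sprojOn C R A B = sproj R A B := by
  have hBC : ocl R B ⊆ C := st13_ocl_sub h hC hB
  ext u
  constructor
  · rintro ⟨⟨hu1, huC, hu2⟩, -⟩
    rw [st13_oclOn h hC hB] at hu1
    refine ⟨hu1, fun a ha => hu2 a ⟨?_, hBC ha.1, ha.2⟩⟩
    rw [st13_oclOn h hC hB]; exact ha.1
  · rintro ⟨hu1, hu2⟩
    have huC : u ∈ C := hBC hu1
    have hu1' : u ∈ oclOn C R B := by rw [st13_oclOn h hC hB]; exact hu1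
    refine ⟨⟨hu1', huC, fun a ha => hu2 a ⟨?_, ha.2.2⟩⟩, huC⟩
    have := ha.1
    rw [st13_oclOn h hC hB] at this
    exact this

lemma st13_flat_inter (h : IsOSpace R F) (hC : C ∈ F) (A : Set X) :
    ocl R (oc R A ∩ C) = oc R A ∩ C := by
  have e : oc R A ∩ C = oc R (A ∪ oc R C) := by
    rw [← st13_inter_oc]
    congr 1
    exact h.flats C hC
  rw [e, st13_ocl_oc R h.symm]

lemma st13_key (h : IsOSpace R F) (hC : C ∈ F) {x : X} {A : Set X}
    (hx : x ∈ C) (hA : A ⊆ C) :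
    sproj R {x} (oc R A) = sproj R {x} (oc R A ∩ C) := by
  have e1 : sproj R {x} (oc R A) = oc R A ∩ oc R (oc R A ∩ oc R {x}) := by
    show ocl R (oc R A) ∩ oc R (ocl R (oc R A) ∩ oc R {x}) = _
    rw [st13_ocl_oc R h.symm A]
  have e2 : sproj R {x} (oc R A ∩ C) =
      (oc R A ∩ C) ∩ oc R ((oc R A ∩ C) ∩ oc R {x}) := by
    show ocl R (oc R A ∩ C) ∩ oc R (ocl R (oc R A ∩ C) ∩ oc R {x}) = _
    rw [st13_flat_inter h hC A]
  rw [e1, e2]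
  ext u
  constructor
  · rintro ⟨hu1, hu2⟩
    have huC : u ∈ C := by
      rw [h.flats C hC]
      intro t ht
      refine hu2 t ⟨st13_oc_anti R hA ht, ?_⟩
      intro y hy
      rw [Set.mem_singleton_iff] at hy
      rw [hy]
      exact ht x hx
    exact ⟨⟨hu1, huC⟩, fun a ha => hu2 a ⟨ha.1.1, ha.2⟩⟩
  · rintro ⟨⟨hu1, huC⟩, hu2⟩
    refine ⟨hu1, ?_⟩
    have hsub : insert x A ⊆ C := Set.insert_subset hx hA
    have key := st13_HL h hC hsub huC ?_
    · intro a ha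
      refine key a ?_
      intro t ht
      rcases Set.mem_insert_iff.mp ht with he | ht'
      · rw [he]; exact ha.2 x rfl
      · exact ha.1 t ht'
    · intro s hs hsC
      refine hu2 s ⟨⟨?_, hsC⟩, ?_⟩
      · exact fun t ht => hs t (Set.mem_insert_iff.mpr (Or.inr ht))
      · intro y hy
        rw [Set.mem_singleton_iff] at hy
        rw [hy]
        exact hs x (Set.mem_insert_iff.mpr (Or.inl rfl))

lemma st13_sdualOn (h : IsOSpace R F) (hC : C ∈ F) {A B : Set X}
    (hA : A ⊆ C) (hB : B ⊆ C) : sdualOn C R A B = sdual R A B := by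
  have hM : oc R A ∩ ocl R B ⊆ C := fun u hu => st13_ocl_sub h hC hB hu.2
  -- G = sproj R (oc R B) (oc R A)
  have hG : sproj R (oc R B) (oc R A) = oc R A ∩ oc R (oc R A ∩ ocl R B) := by
    show ocl R (oc R A) ∩ oc R (ocl R (oc R A) ∩ oc R (oc R B)) = _
    rw [st13_ocl_oc R h.symm A]
    rfl
  -- inner relative sproj
  have hinner : sprojOn C R (ocOn C R B) (ocOn C R A) =
      (oc R A ∩ oc R (oc R A ∩ ocl R B)) ∩ C := by
    rw [st13_sprojOn h hC (fun u hu => hu.1) (fun u hu => hu.1),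
      st13_ocOn, st13_ocOn]
    have e2 : sproj R (oc R B ∩ C) (oc R A ∩ C) =
        (oc R A ∩ C) ∩ oc R ((oc R A ∩ C) ∩ (oc R (oc R B ∩ C) ∩ C)) := by
      show ocl R (oc R A ∩ C) ∩ oc R (ocl R (oc R A ∩ C) ∩ oc R (oc R B ∩ C)) = _
      rw [st13_flat_inter h hC A]
      congr 1
      ext u
      exact ⟨fun hu a ha => hu a ⟨ha.1, ha.2.1⟩,
        fun hu a ha => hu a ⟨ha.1, ha.2, ha.1.2⟩⟩
    rw [e2, st13_oc_relC h hC hB]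
    ext u
    constructor
    · rintro ⟨⟨hu1, huC⟩, hu2⟩
      exact ⟨⟨hu1, fun a ha => hu2 a ⟨⟨ha.1, hM ha⟩, ha.2⟩⟩, huC⟩
    · rintro ⟨⟨hu1, hu2⟩, huC⟩
      exact ⟨⟨hu1, huC⟩, fun a ha => hu2 a ⟨ha.1.1, ha.2⟩⟩
  have hGU : oc R A ∩ oc R (oc R A ∩ ocl R B) = oc R (A ∪ (oc R A ∩ ocl R B)) :=
    st13_inter_oc R A (oc R A ∩ ocl R B)
  have hTU : A ∪ (oc R A ∩ ocl R B) ⊆ C := Set.union_subset hA hM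
  have e3 : sdualOn C R A B =
      oc R (oc R (A ∪ (oc R A ∩ ocl R B)) ∩ C) ∩ C := by
    show ocOn C R (sprojOn C R (ocOn C R B) (ocOn C R A)) = _
    rw [hinner, st13_ocOn, hGU]
  rw [e3, st13_oc_relC h hC hTU]
  show ocl R (A ∪ (oc R A ∩ ocl R B)) = sdual R A B
  show oc R (oc R (A ∪ (oc R A ∩ ocl R B))) = oc R (sproj R (oc R B) (oc R A))
  rw [hG, hGU]

end Stmt13Aux

theorem stmt13 (R : X → X → Prop) (F : Set (Set X)) (h : IsOSpace R F)
    (C : Set X) (hC : C ∈ F) :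
    IsOSpaceOn C R {A ∈ F | A ⊆ C} ∧
    ∀ A B : Set X, A ⊆ C → B ⊆ C →
      ocOn C R A = oc R A ∩ C ∧
      oclOn C R A = ocl R A ∧
      sprojOn C R A B = sproj R A B ∧
      sdualOn C R A B = sdual R A B := by
  have hsub : ∀ A B : Set X, A ⊆ C → B ⊆ C →
      ocOn C R A = oc R A ∩ C ∧ oclOn C R A = ocl R A ∧
      sprojOn C R A B = sproj R A B ∧ sdualOn C R A B = sdual R A B :=
    fun A B hA hB => ⟨st13_ocOn C R A, st13_oclOn h hC hA,
      st13_sprojOn h hC hA hB, st13_sdualOn h hC hA hB⟩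
  refine ⟨?_, hsub⟩
  refine
    { symm := fun x _ y _ hxy => h.symm x y hxy
      zero := fun x hx hxx => ⟨hx, fun y _ => h.zero x hxx y⟩
      sub := fun A hA => hA.2
      flats := ?_
      singcl_mem := ?_
      z_mem := ?_
      oc_mem := ?_
      sproj_mem := ?_
      o1 := ?_
      o2 := ?_
      a := ?_ }
  · -- flats
    intro A hA
    rw [st13_oclOn h hC hA.2]
    exact h.flats A hA.1
  · -- singcl_mem
    intro x hx
    have hx' : ({x} : Set X) ⊆ C := Set.singleton_subset_iff.mpr hx
    rw [st13_oclOn h hC hx']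
    exact ⟨h.singcl_mem x, st13_ocl_sub h hC hx'⟩
  · -- z_mem
    have hz : zsetOn C R = zset R := by
      ext y
      constructor
      · rintro ⟨hyC, hy⟩
        exact h.zero y (hy y hyC)
      · intro hy
        have hyC : y ∈ C := by
          rw [h.flats C hC]
          intro s _
          exact hy s
        exact ⟨hyC, fun x _ => hy x⟩
    rw [hz]
    refine ⟨h.z_mem, fun y hy => ?_⟩
    rw [h.flats C hC]
    intro s _
    exact hy s
  · -- oc_mem
    intro A hA
    have e0 : sproj R (oc R A) C = C ∩ oc R (C ∩ ocl R A) := by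
      show ocl R C ∩ oc R (ocl R C ∩ ocl R A) = C ∩ oc R (C ∩ ocl R A)
      rw [← h.flats C hC]
    have e : ocOn C R A = sproj R (oc R A) C := by
      rw [st13_ocOn, e0, ← h.flats A hA.1,
        Set.inter_eq_self_of_subset_right hA.2]
      exact Set.inter_comm _ _
    refine ⟨?_, fun u hu => hu.1⟩
    rw [e]
    exact h.sproj_mem _ (h.oc_mem A hA.1) C hC
  · -- sproj_mem
    intro A hA B hB
    have e := st13_sprojOn h hC hA.2 hB.2
    refine ⟨?_, fun u hu => hu.2⟩
    rw [e]
    exact h.sproj_mem A hA.1 B hB.1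
  · -- o1
    intro x hx A hA
    have hx' : ({x} : Set X) ⊆ C := Set.singleton_subset_iff.mpr hx
    have hocOn : ocOn C R A ⊆ C := fun u hu => hu.1
    have hS1 : sproj R {x} A ⊆ C := fun u hu => st13_ocl_sub h hC hA.2 hu.1
    have hS2 : sproj R {x} (oc R A ∩ C) ⊆ C := by
      intro u hu
      have h1 := hu.1
      rw [st13_flat_inter h hC A] at h1
      exact h1.2
    rw [st13_sprojOn h hC hx' hA.2, st13_sprojOn h hC hx' hocOn, st13_ocOn,
      st13_oclOn h hC (Set.union_subset hS1 hS2), ← st13_key h hC hx hA.2]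
    exact h.o1 x A hA.1
  · -- o2
    intro x hx A hA
    have hx' : ({x} : Set X) ⊆ C := Set.singleton_subset_iff.mpr hx
    have hocOn : ocOn C R A ⊆ C := fun u hu => hu.1
    have hS2 : sproj R {x} (oc R A ∩ C) ⊆ C := by
      intro u hu
      have h1 := hu.1
      rw [st13_flat_inter h hC A] at h1
      exact h1.2
    rw [st13_sprojOn h hC hx' hA.2, st13_sprojOn h hC hx' hocOn, st13_ocOn,
      st13_oclOn h hC (Set.union_subset hx' hS2), ← st13_key h hC hx hA.2]
    exact h.o2 x A hA.1
  · -- a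
    intro A hA B hB
    intro u hu
    rw [st13_sprojOn h hC hA.2 hB.2] at hu
    have hmem := h.a A hA.1 B hB.1 hu
    simp only [Set.mem_iUnion] at hmem ⊢
    obtain ⟨a, ha, hm⟩ := hmem
    refine ⟨a, ha, ?_⟩
    rw [st13_sprojOn h hC (Set.singleton_subset_iff.mpr (hA.2 ha)) hB.2]
    exact hm
end
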